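/- For every bay configuration B with C columns and h containers per column, if B contains at least one 'special' column (all of whose containers have labels at least omega = (h-1)(C+1)+1, in a bay with C+1 columns from which this column and B are taken), then z_opt(B_{C+1}) <= z_opt(B_C) + S_0(col), where B_{C+1} is B_C augmented with the special column col and S_0(col) counts blocking containers within col. -/

import Mathlib

abbrev Bay (C : ℕ) := Fin C → List ℕ

def S0col : List ℕ → ℕ
  | [] => 0
  | a :: rest => (if rest.any (fun b => decide (b < a)) then 1 else 0) + S0col rest

def S0 {C : ℕ} (B : Bay C) : ℕ := ∑ i : Fin C, S0col (B i)

def bayMem {C : ℕ} (x : ℕ) (B : Bay C) : Prop := ∃ i, x ∈ B i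

def totalCount {C : ℕ} (B : Bay C) : ℕ := ∑ i : Fin C, (B i).length

def WellFormed {C : ℕ} (P : ℕ) (B : Bay C) : Prop :=
  (∀ i, (B i).length ≤ P) ∧ ((List.finRange C).flatMap B).Nodup

def MM {C : ℕ} (B : Bay C) : ℕ := Finset.univ.sup (fun i : Fin C => ((B i).min?).getD 0)

def blockersAux (k : ℕ) : List ℕ → List ℕ
  | [] => []
  | a :: rest => (if rest.min? = some k then [a] else []) ++ blockersAux k rest

def Rk {C : ℕ} (k : ℕ) (B : Bay C) : List ℕ :=
  (List.finRange C).flatMap (fun i => blockersAux k (B i))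

def discard {C : ℕ} (s : List ℕ) (B : Bay C) : Bay C :=
  fun i => (B i).filter (fun x => decide (x ∉ s))

def Dk {C : ℕ} (B : Bay C) (n1 : ℕ) : ℕ → Bay C
  | 0 => B
  | m+1 => discard ((n1+m) :: Rk (n1+m) B) (Dk B n1 m)

def Sp {C : ℕ} (B : Bay C) (n1 N p : ℕ) : ℕ :=
  S0 B + ∑ k ∈ Finset.Icc n1 (min (p + n1 - 1) N),
    ((Rk k B).filter (fun r => decide (MM (Dk B n1 (k - n1)) < r))).length

def RelocStep {C : ℕ} (P : ℕ) (B B' : Bay C) : Prop :=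
  ∃ (c i : Fin C) (r t : ℕ) (rest : List ℕ),
    i ≠ c ∧ B c = r :: rest ∧ t ∈ rest ∧ (∀ x, bayMem x B → t ≤ x) ∧ t < r ∧
    (B i).length < P ∧
    B' = fun j => if j = c then rest else if j = i then r :: B j else B j

inductive Steps {C : ℕ} (P : ℕ) : Bay C → ℕ → Prop
  | empty : ∀ B : Bay C, (∀ i, B i = []) → Steps P B 0
  | retrieve : ∀ (B : Bay C) (c : Fin C) (t : ℕ) (rest : List ℕ) (n : ℕ),
      B c = t :: rest → (∀ x, bayMem x B → t ≤ x) →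
      Steps P (Function.update B c rest) n → Steps P B n
  | relocate : ∀ (B B' : Bay C) (n : ℕ), RelocStep P B B' → Steps P B' n → Steps P B (n+1)

def IsOptimal {C : ℕ} (P : ℕ) (B : Bay C) (n : ℕ) : Prop :=
  Steps P B n ∧ ∀ m, Steps P B m → n ≤ m

def cmin (N : ℕ) (l : List ℕ) : ℕ := (l.min?).getD (N+1)

inductive HRun {C : ℕ} (P N : ℕ) : Bay C → ℕ → Prop
  | empty : ∀ B : Bay C, (∀ i, B i = []) → HRun P N B 0
  | retrieve : ∀ (B : Bay C) (c : Fin C) (t : ℕ) (rest : List ℕ) (n : ℕ),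
      B c = t :: rest → (∀ x, bayMem x B → t ≤ x) →
      HRun P N (Function.update B c rest) n → HRun P N B n
  | relocate : ∀ (B : Bay C) (c i : Fin C) (r t : ℕ) (rest : List ℕ) (n : ℕ),
      i ≠ c → B c = r :: rest → t ∈ rest → (∀ x, bayMem x B → t ≤ x) → t < r →
      (B i).length < P →
      ((r < cmin N (B i) ∧ ∀ j : Fin C, j ≠ c → r < cmin N (B j) → cmin N (B i) ≤ cmin N (B j)) ∨
       ((∀ j : Fin C, j ≠ c → ¬ r < cmin N (B j)) ∧ ∀ j : Fin C, j ≠ c → cmin N (B j) ≤ cmin N (B i))) →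
      HRun P N (fun j => if j = c then rest else if j = i then r :: B j else B j) n →
      HRun P N B (n+1)

/-!
Run an optimal retrieval sequence of `B` inside `B_{C+1}`, leaving the special column untouched,
for as long as the current target is below `ω`, hence below every label of the special column.
Once the target reaches `ω`, every container left has a label in `[ω, h(C+1)]`, so at most `C+1`
containers remain in `C+1` columns. Then every blocking container can be moved to an empty
column, which empties the bay with exactly `S0` relocations; and `S0` is a lower bound for the
number of relocations of any retrieval sequence, in particular for the rest of the run on `B`.
-/

open Function

section Bays

variable {C : ℕ}

def contents (B : Bay C) : Multiset ℕ := ∑ i, (B i : Multiset ℕ)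

theorem mem_contents {x : ℕ} {B : Bay C} : x ∈ contents B ↔ bayMem x B := by
  simp [contents, bayMem, Multiset.mem_sum]

theorem card_contents (B : Bay C) : Multiset.card (contents B) = totalCount B := by
  simp [contents, totalCount]

theorem contents_eq_coe_flatMap (B : Bay C) :
    contents B = ((List.finRange C).flatMap B : Multiset ℕ) := by
  rw [← Multiset.coe_bind]
  simp [contents, Multiset.bind, Multiset.join, Finset.sum, Fin.univ_def]

theorem sum_update_add {M : Type*} [AddCommMonoid M] (g : List ℕ → M) (B : Bay C) (c : Fin C)
    (l : List ℕ) : ∑ i, g (update B c l i) + g (B c) = ∑ i, g (B i) + g l := by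
  simp_rw [apply_update (fun _ => g)]
  rw [Finset.sum_update_of_mem (Finset.mem_univ c),
    ← Finset.add_sum_erase _ _ (Finset.mem_univ c), Finset.erase_eq]
  abel

theorem contents_update_add (B : Bay C) (c : Fin C) (l : List ℕ) :
    contents (update B c l) + B c = contents B + l :=
  sum_update_add (fun l => (l : Multiset ℕ)) B c l

theorem S0_update_add (B : Bay C) (c : Fin C) (l : List ℕ) :
    S0 (update B c l) + S0col (B c) = S0 B + S0col l :=
  sum_update_add S0col B c l

theorem relocate_eq_update {B : Bay C} {c i : Fin C} (hic : i ≠ c) (r : ℕ) (rest : List ℕ) :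
    (fun j => if j = c then rest else if j = i then r :: B j else B j) =
      update (update B c rest) i (r :: B i) := by
  funext j
  by_cases hjc : j = c
  · subst hjc; simp [hic.symm]
  · by_cases hji : j = i
    · subst hji; simp [hjc]
    · simp [hjc, hji]

end Bays

section Blocking

theorem S0col_cons_of_forall_le {a : ℕ} {l : List ℕ} (h : ∀ b ∈ l, a ≤ b) :
    S0col (a :: l) = S0col l := by
  simpa [S0col] using h

theorem S0col_cons_of_exists_lt {a : ℕ} {l : List ℕ} (h : ∃ b ∈ l, b < a) :
    S0col (a :: l) = S0col l + 1 := by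
  simpa [S0col, add_comm] using h

theorem S0col_le_S0col_cons (a : ℕ) (l : List ℕ) : S0col l ≤ S0col (a :: l) := by
  simp [S0col]

theorem S0col_cons_le (a : ℕ) (l : List ℕ) : S0col (a :: l) ≤ S0col l + 1 := by
  simp only [S0col]
  split <;> omega

end Blocking

section Moves

variable {C : ℕ} {B : Bay C} {c i : Fin C} {r t : ℕ} {rest : List ℕ}

theorem contents_retrieve (hc : B c = t :: rest) :
    contents B = t ::ₘ contents (update B c rest) := by
  have h := contents_update_add B c rest
  rw [hc] at h
  ext a
  have e := congrArg (Multiset.count a) h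
  simp only [Multiset.count_add, ← Multiset.cons_coe, Multiset.count_cons] at e ⊢
  omega

theorem S0_retrieve (hc : B c = t :: rest) (hmin : ∀ x, bayMem x B → t ≤ x) :
    S0 (update B c rest) = S0 B := by
  have h := S0_update_add B c rest
  rw [hc, S0col_cons_of_forall_le fun b hb => hmin b ⟨c, hc ▸ List.mem_cons_of_mem t hb⟩] at h
  omega

theorem contents_relocate (hic : i ≠ c) (hc : B c = r :: rest) :
    contents (update (update B c rest) i (r :: B i)) = contents B := by
  have h₁ := contents_update_add (update B c rest) i (r :: B i)
  have h₂ := contents_update_add B c rest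
  rw [update_of_ne hic] at h₁
  rw [hc] at h₂
  ext a
  have e₁ := congrArg (Multiset.count a) h₁
  have e₂ := congrArg (Multiset.count a) h₂
  simp only [Multiset.count_add, ← Multiset.cons_coe, Multiset.count_cons] at e₁ e₂
  omega

theorem S0_relocate_add (hic : i ≠ c) (hc : B c = r :: rest) :
    S0 (update (update B c rest) i (r :: B i)) + S0col (B i) + S0col (r :: rest) =
      S0 B + S0col rest + S0col (r :: B i) := by
  have h₁ := S0_update_add (update B c rest) i (r :: B i)
  have h₂ := S0_update_add B c rest
  rw [update_of_ne hic] at h₁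
  rw [hc] at h₂
  omega

theorem totalCount_retrieve (hc : B c = t :: rest) :
    totalCount B = totalCount (update B c rest) + 1 := by
  rw [← card_contents, ← card_contents, contents_retrieve hc, Multiset.card_cons]

theorem totalCount_relocate (hic : i ≠ c) (hc : B c = r :: rest) :
    totalCount (update (update B c rest) i (r :: B i)) = totalCount B := by
  rw [← card_contents, ← card_contents, contents_relocate hic hc]

theorem S0_relocate_add_one_of_eq_nil (hic : i ≠ c) (hc : B c = r :: rest) (hi : B i = [])
    (hblock : ∃ b ∈ rest, b < r) :
    S0 (update (update B c rest) i (r :: B i)) + 1 = S0 B := by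
  have h := S0_relocate_add hic hc
  rw [S0col_cons_of_exists_lt hblock, S0col_cons_of_forall_le (a := r) (by simp [hi]),
    show S0col (B i) = 0 by simp [hi, S0col]] at h
  omega

end Moves

section Relocations

variable {C P : ℕ}

theorem S0_le_of_steps {B : Bay C} {n : ℕ} (hs : Steps P B n) : S0 B ≤ n := by
  induction hs with
  | empty B hB => simp [S0, S0col, hB]
  | retrieve B c t rest n hc hmin _ ih => rwa [S0_retrieve hc hmin] at ih
  | relocate B B' n hrel _ ih =>
    obtain ⟨c, i, r, t, rest, hic, hc, -, -, -, -, rfl⟩ := hrel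
    have h := S0_relocate_add hic hc
    rw [relocate_eq_update hic] at ih
    have := S0col_le_S0col_cons r (B i)
    have := S0col_cons_le r rest
    omega

theorem exists_eq_nil_of_totalCount_le {D : Bay C} {c : Fin C} (hD : totalCount D ≤ C)
    (hc : 2 ≤ (D c).length) : ∃ i, i ≠ c ∧ D i = [] := by
  by_contra! hne
  have hpos : ∀ i ∈ Finset.univ.erase c, 1 ≤ (D i).length := fun i hi =>
    List.length_pos_iff.2 (hne i (Finset.ne_of_mem_erase hi))
  have := Finset.card_nsmul_le_sum _ _ 1 hpos
  rw [totalCount, ← Finset.add_sum_erase _ _ (Finset.mem_univ c)] at hD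
  simp only [Finset.card_erase_of_mem (Finset.mem_univ c), Finset.card_univ, Fintype.card_fin,
    smul_eq_mul, mul_one] at this
  omega

theorem exists_min_bayMem {D : Bay C} (hD : ∃ i, D i ≠ []) :
    ∃ t, bayMem t D ∧ ∀ x, bayMem x D → t ≤ x := by
  classical
  obtain ⟨i, hi⟩ := hD
  have hex : ∃ x, bayMem x D := ⟨_, i, List.head_mem hi⟩
  exact ⟨Nat.find hex, Nat.find_spec hex, fun x hx => Nat.find_min' hex hx⟩

/-- A blocking container always has an empty column to go to, where it blocks nothing. -/
theorem steps_S0_of_totalCount_le (hP : 0 < P) (D : Bay C) (hD : totalCount D ≤ C) :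
    Steps P D (S0 D) := by
  induction hN : totalCount D + S0 D using Nat.strong_induction_on generalizing D with
  | _ N ih =>
    by_cases hnil : ∀ i, D i = []
    · simpa [S0, S0col, hnil] using Steps.empty (P := P) D hnil
    push Not at hnil
    obtain ⟨t, ⟨c, htc⟩, hmin⟩ := exists_min_bayMem hnil
    obtain ⟨a, l, hc⟩ : ∃ a l, D c = a :: l :=
      List.exists_cons_of_ne_nil (List.ne_nil_of_mem htc)
    rw [hc] at htc
    obtain rfl | hta := (hmin a ⟨c, hc ▸ List.mem_cons_self⟩).eq_or_lt
    · have hS0 := S0_retrieve hc hmin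
      have hcount := totalCount_retrieve hc
      rw [← hS0]
      exact Steps.retrieve D c t l _ hc hmin (ih _ (by omega) _ (by omega) rfl)
    have htl : t ∈ l := (List.mem_cons.1 htc).resolve_left hta.ne
    obtain ⟨i, hic, hi⟩ := exists_eq_nil_of_totalCount_le hD
      (by rw [hc, List.length_cons, Nat.succ_le_succ_iff]; exact List.length_pos_of_mem htl)
    have hS0 := S0_relocate_add_one_of_eq_nil hic hc hi ⟨t, htl, hta⟩
    have hcount := totalCount_relocate hic hc
    rw [← hS0]
    exact Steps.relocate D _ _
      ⟨c, i, a, t, l, hic, hc, htl, hmin, hta, by simpa [hi] using hP,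
        (relocate_eq_update hic a l).symm⟩
      (ih _ (by omega) _ (by omega) rfl)

end Relocations

section SpecialColumn

variable {C P : ℕ} {col : List ℕ}

theorem bayMem_cons {x : ℕ} {B : Bay C} :
    bayMem x (Fin.cons col B : Bay (C + 1)) ↔ x ∈ col ∨ bayMem x B := by
  simp [bayMem, Fin.exists_fin_succ]

theorem contents_cons (B : Bay C) :
    contents (Fin.cons col B : Bay (C + 1)) = col + contents B := by
  simp [contents, Fin.sum_univ_succ]

theorem S0_cons (B : Bay C) : S0 (Fin.cons col B : Bay (C + 1)) = S0col col + S0 B := by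
  simp [S0, Fin.sum_univ_succ]

theorem update_cons_succ (B : Bay C) (c : Fin C) (l : List ℕ) :
    update (Fin.cons col B : Bay (C + 1)) c.succ l = Fin.cons col (update B c l) := by
  rw [← Fin.cons_self_tail (update _ _ _), update_of_ne (Fin.succ_ne_zero c).symm]
  congr 1
  funext j
  simp [Fin.tail, update_apply, Fin.succ_inj]

theorem relocate_cons (B : Bay C) {c i : Fin C} (hic : i ≠ c) (r : ℕ) (rest : List ℕ) :
    (Fin.cons col (fun j => if j = c then rest else if j = i then r :: B j else B j) :
        Bay (C + 1)) =
      fun j => if j = c.succ then rest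
        else if j = i.succ then r :: (Fin.cons col B : Bay (C + 1)) j
        else (Fin.cons col B : Bay (C + 1)) j := by
  rw [relocate_eq_update hic, relocate_eq_update ((Fin.succ_injective _).ne hic),
    update_cons_succ, update_cons_succ, Fin.cons_succ]

theorem totalCount_le_of_nodup {D : Bay C} {ω L : ℕ} (hnd : (contents D).Nodup)
    (hD : ∀ x ∈ contents D, ω ≤ x ∧ x ≤ L) : totalCount D ≤ L + 1 - ω := by
  rw [← card_contents, ← Multiset.toFinset_card_of_nodup hnd, ← Nat.card_Icc]
  exact Finset.card_le_card fun x hx => Finset.mem_Icc.2 (hD x (Multiset.mem_toFinset.1 hx))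

variable {ω L : ℕ}

theorem exists_steps_cons_of_forall_ge (hP : 0 < P) (hωL : L + 1 ≤ ω + (C + 1))
    (hcol : ∀ x ∈ col, ω ≤ x) {B : Bay C} {n : ℕ} (hs : Steps P B n)
    (hB : ∀ x, bayMem x B → ω ≤ x) (hnd : (contents (Fin.cons col B : Bay (C + 1))).Nodup)
    (hL : ∀ x ∈ contents (Fin.cons col B : Bay (C + 1)), x ≤ L) :
    ∃ k ≤ n + S0col col, Steps P (Fin.cons col B : Bay (C + 1)) k := by
  have hcount := totalCount_le_of_nodup hnd fun x hx => ⟨by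
    rw [contents_cons, Multiset.mem_add, mem_contents] at hx
    exact hx.elim (hcol x) (hB x), hL x hx⟩
  refine ⟨_, ?_, steps_S0_of_totalCount_le hP _ (by omega)⟩
  rw [S0_cons]
  have := S0_le_of_steps hs
  omega

theorem exists_steps_cons_le (hP : 0 < P) (hωL : L + 1 ≤ ω + (C + 1))
    (hcol : ∀ x ∈ col, ω ≤ x) {B : Bay C} {n : ℕ} (hs : Steps P B n)
    (hnd : (contents (Fin.cons col B : Bay (C + 1))).Nodup)
    (hL : ∀ x ∈ contents (Fin.cons col B : Bay (C + 1)), x ≤ L) :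
    ∃ k ≤ n + S0col col, Steps P (Fin.cons col B : Bay (C + 1)) k := by
  induction hs with
  | empty B hB =>
    exact exists_steps_cons_of_forall_ge hP hωL hcol (.empty B hB) (by simp [bayMem, hB]) hnd hL
  | retrieve B c t rest n hc hmin hs ih =>
    obtain ht | ht := lt_or_ge t ω
    · have e : contents (Fin.cons col B : Bay (C + 1)) =
          t ::ₘ contents (Fin.cons col (update B c rest) : Bay (C + 1)) := by
        rw [contents_cons, contents_cons, contents_retrieve hc, Multiset.add_cons]
      rw [e] at hnd hL
      obtain ⟨k, hk, hsk⟩ := ih hnd.of_cons fun x hx => hL x (Multiset.mem_cons_of_mem hx)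
      refine ⟨k, hk, .retrieve _ c.succ t rest k (by simpa using hc) ?_
        (by rwa [update_cons_succ])⟩
      exact fun x hx => (bayMem_cons.1 hx).elim (fun hx => ht.le.trans (hcol x hx)) (hmin x)
    · exact exists_steps_cons_of_forall_ge hP hωL hcol (.retrieve B c t rest n hc hmin hs)
        (fun x hx => ht.trans (hmin x hx)) hnd hL
  | relocate B B' n hrel hs ih =>
    obtain ⟨c, i, r, t, rest, hic, hc, htr, hmin, hlt, hlen, hB'⟩ := hrel
    obtain ht | ht := lt_or_ge t ω
    · have e : contents (Fin.cons col B' : Bay (C + 1)) =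
          contents (Fin.cons col B : Bay (C + 1)) := by
        rw [contents_cons, contents_cons, hB', relocate_eq_update hic, contents_relocate hic hc]
      rw [← e] at hnd hL
      obtain ⟨k, hk, hsk⟩ := ih hnd hL
      refine ⟨k + 1, by omega, .relocate _ _ k ⟨c.succ, i.succ, r, t, rest,
        (Fin.succ_injective _).ne hic, by simpa using hc, htr, ?_, hlt, by simpa using hlen,
        by rw [hB', relocate_cons B hic]⟩ hsk⟩
      exact fun x hx => (bayMem_cons.1 hx).elim (fun hx => ht.le.trans (hcol x hx)) (hmin x)
    · exact exists_steps_cons_of_forall_ge hP hωL hcol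
        (.relocate B B' n ⟨c, i, r, t, rest, hic, hc, htr, hmin, hlt, hlen, hB'⟩ hs)
        (fun x hx => ht.trans (hmin x hx)) hnd hL

end SpecialColumn

theorem stmt19_general {C : ℕ} (h P m n : ℕ) (col : List ℕ) (B : Bay C)
    (hhP : h + 1 ≤ P)
    (hω : ∀ x ∈ col, (h - 1) * (C + 1) + 1 ≤ x)
    (hwf : WellFormed P (Fin.cons col B : Bay (C + 1)))
    (hlabels : ∀ x, bayMem x (Fin.cons col B : Bay (C + 1)) → 1 ≤ x ∧ x ≤ h * (C + 1))
    (hm : IsOptimal P (Fin.cons col B : Bay (C + 1)) m)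
    (hn : IsOptimal P B n) :
    m ≤ n + S0col col := by
  have hωL : h * (C + 1) + 1 ≤ (h - 1) * (C + 1) + 1 + (C + 1) := by
    rw [Nat.sub_one_mul]
    omega
  have hnd : (contents (Fin.cons col B : Bay (C + 1))).Nodup := by
    rw [contents_eq_coe_flatMap]
    exact Multiset.coe_nodup.2 hwf.2
  obtain ⟨k, hk, hsteps⟩ := exists_steps_cons_le (by omega) hωL hω hn.1 hnd
    fun x hx => (hlabels x (mem_contents.1 hx)).2
  exact (hm.2 k hsteps).trans hk

/-- if `B_{C+1}` consists of a "special" column `col` (all of whose `h`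
containers have labels at least `ω = (h-1)(C+1)+1`) together with a bay `B` of `C`
columns each holding `h` containers, then the optimal number of relocations satisfies
`z_opt(B_{C+1}) ≤ z_opt(B_C) + S0(col)`. -/
theorem stmt19 {C : ℕ} (h P m n : ℕ) (col : List ℕ) (B : Bay C)
    (hh : 1 ≤ h) (hhP : h + 1 ≤ P) (hC : h + 1 ≤ C) (hPC : P ≤ C)
    (hcol : col.length = h) (hω : ∀ x ∈ col, (h - 1) * (C + 1) + 1 ≤ x)
    (hcols : ∀ i, (B i).length = h)
    (hwf : WellFormed P (Fin.cons col B : Bay (C + 1)))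
    (hlabels : ∀ x, bayMem x (Fin.cons col B : Bay (C + 1)) → 1 ≤ x ∧ x ≤ h * (C + 1))
    (hm : IsOptimal P (Fin.cons col B : Bay (C + 1)) m)
    (hn : IsOptimal P B n) :
    m ≤ n + S0col col :=
  stmt19_general h P m n col B hhP hω hwf hlabels hm hn
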